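/- arXiv:2504.17926 — 5 statements merged into one kernel-verified Lean document; each statement's English description precedes it below -/
import Mathlib

section
/- Let d1, d2, K, β be positive real numbers with β < β0 = 8(d1+d2)/K. Then the only pair (f,m) of nonnegative real numbers satisfying the steady-state system (β/2)·f·m·(1-(f+m)/K) = d1·f and (β/2)·f·m·(1-(f+m)/K) = d2·m is (f,m) = (0,0). -/
/-!
At a steady state with `f, m ≠ 0` one may cancel `f` and `m`, and adding the two reduced equations
gives `(β/2)·s·(1 - s/K) = d₁ + d₂` for the total population `s = f + m`. The logistic factor
`s·(1 - s/K)` never exceeds `K/4`, so `d₁ + d₂ ≤ βK/8`, i.e. `β ≥ β₀`. If one of `f, m` vanishes,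
the other equation forces the other to vanish as well.
-/

theorem mul_one_sub_div_le_div_four {K : ℝ} (hK : 0 < K) (s : ℝ) : s * (1 - s / K) ≤ K / 4 := by
  have key : s * (1 - s / K) = K / 4 - (s - K / 2) ^ 2 / K := by
    field_simp
    ring
  rw [key]
  linarith [div_nonneg (sq_nonneg (s - K / 2)) hK.le]

theorem add_eq_of_mul_eq_mul_of_mul_eq_mul {c g d1 d2 f m : ℝ} (hf : f ≠ 0)
    (hm : m ≠ 0) (h1 : c * f * m * g = d1 * f) (h2 : c * f * m * g = d2 * m) :
    c * (f + m) * g = d1 + d2 := by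
  have e1 : c * m * g = d1 := mul_left_cancel₀ hf (by linear_combination h1)
  have e2 : c * f * g = d2 := mul_left_cancel₀ hm (by linear_combination h2)
  linear_combination e1 + e2

theorem stmt0_general (d1 d2 K β : ℝ) (hd1 : 0 < d1) (hd2 : 0 < d2) (hK : 0 < K) (hβ : 0 < β)
    (hβ0 : β < 8 * (d1 + d2) / K) (f m : ℝ)
    (h1 : β / 2 * f * m * (1 - (f + m) / K) = d1 * f)
    (h2 : β / 2 * f * m * (1 - (f + m) / K) = d2 * m) :
    f = 0 ∧ m = 0 := by
  by_cases hf : f = 0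
  · subst hf
    exact ⟨rfl, by simpa [hd2.ne'] using h2.symm⟩
  by_cases hm : m = 0
  · subst hm
    exact absurd (by simpa [hd1.ne'] using h1.symm) hf
  have hsum := add_eq_of_mul_eq_mul_of_mul_eq_mul hf hm h1 h2
  have hβ0' : β * K < 8 * (d1 + d2) := (lt_div_iff₀ hK).mp hβ0
  have : d1 + d2 ≤ β * K / 8 :=
    calc d1 + d2 = β / 2 * ((f + m) * (1 - (f + m) / K)) := by linear_combination -hsum
      _ ≤ β / 2 * (K / 4) := by gcongr; exact mul_one_sub_div_le_div_four hK _
      _ = β * K / 8 := by ring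
  linarith

/-- If `0 < β < β₀ = 8(d₁+d₂)/K`, the only nonnegative solution of the
steady-state system `(β/2)·f·m·(1-(f+m)/K) = d₁·f`, `(β/2)·f·m·(1-(f+m)/K) = d₂·m`
is `(f, m) = (0, 0)`. -/
theorem stmt0 (d1 d2 K β : ℝ) (hd1 : 0 < d1) (hd2 : 0 < d2) (hK : 0 < K) (hβ : 0 < β)
    (hβ0 : β < 8 * (d1 + d2) / K) (f m : ℝ) (hf : 0 ≤ f) (hm : 0 ≤ m)
    (h1 : β / 2 * f * m * (1 - (f + m) / K) = d1 * f)
    (h2 : β / 2 * f * m * (1 - (f + m) / K) = d2 * m) :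
    f = 0 ∧ m = 0 :=
  stmt0_general d1 d2 K β hd1 hd2 hK hβ hβ0 f m h1 h2
end

section
/- Let d1, d2, K, β be positive real numbers with β = β0 = 8(d1+d2)/K. Then the set of pairs (f,m) of nonnegative real numbers satisfying the steady-state system F1(f,m) = 0 and F2(f,m) = 0 is exactly {(0,0), (4·d2/β, 4·d1/β)}. -/
/-!
Subtracting the two equations gives `d1 f = d2 m`, so `f = 0` forces `m = 0`. If `f ≠ 0`,
cancelling `f` and `d1` from the first equation and substituting `m = d1 f / d2` leaves the
quadratic `β (d1 + d2) f² - β d2 K f + 2 d2² K = 0`, whose discriminant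
`β d2² K (β K - 8 (d1 + d2))` vanishes exactly at `β = β₀`; its double root is `f = 4 d2 / β`.
-/

def IsSteadyState (β d1 d2 K f m : ℝ) : Prop :=
  β / 2 * f * m * (1 - (f + m) / K) - d1 * f = 0 ∧
    β / 2 * f * m * (1 - (f + m) / K) - d2 * m = 0

theorem discrim_eq_zero_of_eq_beta0 {β d1 d2 K : ℝ} (hK : K ≠ 0) (hβ0 : β = 8 * (d1 + d2) / K) :
    discrim (β * (d1 + d2)) (-(β * d2 * K)) (2 * d2 ^ 2 * K) = 0 := by
  rw [discrim, hβ0]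
  field_simp
  ring

namespace IsSteadyState

variable {β d1 d2 K f m : ℝ}

theorem mul_fst_eq_mul_snd (h : IsSteadyState β d1 d2 K f m) : d1 * f = d2 * m := by
  linarith [h.1, h.2]

theorem snd_eq_zero (h : IsSteadyState β d1 d2 K 0 m) (hd2 : d2 ≠ 0) : m = 0 := by
  simpa [hd2] using h.mul_fst_eq_mul_snd

theorem quadratic_eq_zero (h : IsSteadyState β d1 d2 K f m) (hd1 : d1 ≠ 0) (hd2 : d2 ≠ 0)
    (hK : K ≠ 0) (hf : f ≠ 0) :
    β * (d1 + d2) * (f * f) + -(β * d2 * K) * f + 2 * d2 ^ 2 * K = 0 := by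
  have hm : m = d1 * f / d2 := by
    rw [eq_div_iff hd2]; linarith [h.mul_fst_eq_mul_snd]
  have h1 := h.1
  rw [hm] at h1
  field_simp at h1
  apply mul_left_cancel₀ (mul_ne_zero hd1 hf)
  linear_combination -h1

theorem eq_of_eq_beta0 (h : IsSteadyState β d1 d2 K f m) (hd1 : d1 ≠ 0) (hd2 : d2 ≠ 0)
    (hK : K ≠ 0) (hβ : β ≠ 0) (hβ0 : β = 8 * (d1 + d2) / K) (hf : f ≠ 0) :
    f = 4 * d2 / β ∧ m = 4 * d1 / β := by
  have hs : d1 + d2 ≠ 0 := by rintro hs; simp [hs] at hβ0; exact hβ hβ0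
  have hroot := (quadratic_eq_zero_iff_of_discrim_eq_zero (mul_ne_zero hβ hs)
    (discrim_eq_zero_of_eq_beta0 hK hβ0) f).1 (h.quadratic_eq_zero hd1 hd2 hK hf)
  have hf' : f = 4 * d2 / β := by
    rw [hroot, hβ0]
    field_simp
    ring
  refine ⟨hf', ?_⟩
  rw [eq_div_iff hβ]
  apply mul_left_cancel₀ hd2
  linear_combination (-β) * h.mul_fst_eq_mul_snd + d1 * (eq_div_iff hβ).1 hf'

end IsSteadyState

theorem isSteadyState_zero (β d1 d2 K : ℝ) : IsSteadyState β d1 d2 K 0 0 := by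
  simp [IsSteadyState]

theorem isSteadyState_of_eq_beta0 {β d1 d2 K : ℝ} (hK : K ≠ 0) (hβ : β ≠ 0)
    (hβ0 : β = 8 * (d1 + d2) / K) : IsSteadyState β d1 d2 K (4 * d2 / β) (4 * d1 / β) := by
  have hβK : β * K = 8 * (d1 + d2) := by rw [hβ0]; field_simp
  constructor <;> (field_simp; linear_combination (8 * d1 * d2) * hβK)

theorem stmt4_general (d1 d2 K β : ℝ) (hd1 : 0 < d1) (hd2 : 0 < d2) (hK : 0 < K)
    (hβ0 : β = 8 * (d1 + d2) / K) :
    {p : ℝ × ℝ | 0 ≤ p.1 ∧ 0 ≤ p.2 ∧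
        β / 2 * p.1 * p.2 * (1 - (p.1 + p.2) / K) - d1 * p.1 = 0 ∧
        β / 2 * p.1 * p.2 * (1 - (p.1 + p.2) / K) - d2 * p.2 = 0} =
      {((0 : ℝ), (0 : ℝ)), (4 * d2 / β, 4 * d1 / β)} := by
  have hβ : 0 < β := hβ0 ▸ by positivity
  ext ⟨f, m⟩
  change 0 ≤ f ∧ 0 ≤ m ∧ IsSteadyState β d1 d2 K f m ↔ (f, m) = (0, 0) ∨ (f, m) = _
  simp only [Prod.mk.injEq]
  constructor
  · rintro ⟨-, -, h⟩
    rcases eq_or_ne f 0 with rfl | hf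
    · exact Or.inl ⟨rfl, h.snd_eq_zero hd2.ne'⟩
    · exact Or.inr (h.eq_of_eq_beta0 hd1.ne' hd2.ne' hK.ne' hβ.ne' hβ0 hf)
  · rintro (⟨rfl, rfl⟩ | ⟨rfl, rfl⟩)
    · exact ⟨le_rfl, le_rfl, isSteadyState_zero β d1 d2 K⟩
    · exact ⟨by positivity, by positivity, isSteadyState_of_eq_beta0 hK.ne' hβ.ne' hβ0⟩

/-- If `β = β₀ = 8(d₁+d₂)/K`, then the nonnegative steady states of the
system `F₁ = 0`, `F₂ = 0` are exactly `(0,0)` and `(4d₂/β, 4d₁/β)`. -/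
theorem stmt4 (d1 d2 K β : ℝ) (hd1 : 0 < d1) (hd2 : 0 < d2) (hK : 0 < K) (hβ : 0 < β)
    (hβ0 : β = 8 * (d1 + d2) / K) :
    {p : ℝ × ℝ | 0 ≤ p.1 ∧ 0 ≤ p.2 ∧
        β / 2 * p.1 * p.2 * (1 - (p.1 + p.2) / K) - d1 * p.1 = 0 ∧
        β / 2 * p.1 * p.2 * (1 - (p.1 + p.2) / K) - d2 * p.2 = 0} =
      {((0 : ℝ), (0 : ℝ)), (4 * d2 / β, 4 * d1 / β)} :=
  stmt4_general d1 d2 K β hd1 hd2 hK hβ0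
end

section
/- Let d1, d2, K, β be positive real numbers and let f, m be positive real numbers satisfying the steady-state system F1(f,m) = 0 and F2(f,m) = 0. Then the trace of the Jacobian matrix A(f,m) equals -β·f·m/K (in particular it is negative), and the determinant of A(f,m) equals β·(d1+d2)·f·m/(2K) - d1·d2. -/
/-- At a positive steady state `(f,m)` (i.e. `F₁(f,m) = 0`, `F₂(f,m) = 0` with
`f, m > 0`), the Jacobian matrix `A(f,m)` has trace `-β·f·m/K` (which is negative) and
determinant `β·(d₁+d₂)·f·m/(2K) - d₁·d₂`. -/
theorem stmt9 (d1 d2 K β : ℝ) (hd1 : 0 < d1) (hd2 : 0 < d2) (hK : 0 < K) (hβ : 0 < β)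
    (f m : ℝ) (hf : 0 < f) (hm : 0 < m)
    (h1 : β / 2 * f * m * (1 - (f + m) / K) - d1 * f = 0)
    (h2 : β / 2 * f * m * (1 - (f + m) / K) - d2 * m = 0)
    (A : Matrix (Fin 2) (Fin 2) ℝ)
    (hA : A =
      !![β * m / 2 * ((1 - (f + m) / K) - f / K) - d1, β * f / 2 * ((1 - (f + m) / K) - m / K);
         β * m / 2 * ((1 - (f + m) / K) - f / K), β * f / 2 * ((1 - (f + m) / K) - m / K) - d2]) :
    A.trace = -(β * f * m) / K ∧ A.trace < 0 ∧
    A.det = β * (d1 + d2) * f * m / (2 * K) - d1 * d2 := by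
  have hK' : (K : ℝ) ≠ 0 := hK.ne'
  have hf' : f ≠ 0 := hf.ne'
  have hm' : m ≠ 0 := hm.ne'
  have e1 : β / 2 * m * (1 - (f + m) / K) = d1 := by
    have := h1
    field_simp at this ⊢
    nlinarith [this]
  have e2 : β / 2 * f * (1 - (f + m) / K) = d2 := by
    field_simp at h2 ⊢
    nlinarith [h2]
  subst hA
  rw [Matrix.trace_fin_two, Matrix.det_fin_two]
  simp [Matrix.vecHead, Matrix.vecTail]
  have htr : (β * m / 2 * ((1 - (f + m) / K) - f / K) - d1) +
      (β * f / 2 * ((1 - (f + m) / K) - m / K) - d2) = -(β * f * m) / K := by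
    linear_combination e1 + e2
  refine ⟨htr, ?_, ?_⟩
  · rw [htr, neg_div]
    have : 0 < β * f * m / K := by positivity
    linarith
  · linear_combination (-d2) * e1 + (-d1) * e2
end

section
/- Let d1, d2, K, β be positive real numbers with β > β0 = 8(d1+d2)/K and set b = √(1 - 8(d1+d2)/(K·β)). Then the Jacobian matrix A(f₊,m₊) has negative trace and positive determinant, and consequently every complex root of its characteristic polynomial has negative real part. -/
/-!
Since `b² = 1 - 8(d₁+d₂)/(Kβ)`, the identity `βK(1 - b²) = 8(d₁+d₂)` eliminates `β` and `K` from
the Jacobian at `(f₊, m₊)`: its trace is `-2d₁d₂(1+b)/((d₁+d₂)(1-b))` and its determinant is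
`2d₁d₂b/(1-b)`, whose signs are clear because `0 < b < 1`. The characteristic polynomial is
`z² - tr·z + det`; a real root of it cannot be nonnegative since `tr < 0 < det`, and a non-real
root has real part `tr/2`.
-/

noncomputable def jacobian (d1 d2 K β f m : ℝ) : Matrix (Fin 2) (Fin 2) ℝ :=
  !![β * m / 2 * ((1 - (f + m) / K) - f / K) - d1, β * f / 2 * ((1 - (f + m) / K) - m / K);
     β * m / 2 * ((1 - (f + m) / K) - f / K), β * f / 2 * ((1 - (f + m) / K) - m / K) - d2]

section Equilibrium

variable {d1 d2 K β b : ℝ}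

lemma jacobian_equilibrium (hs : d1 + d2 ≠ 0) (hK : K ≠ 0) (hb : b ≠ 1)
    (hβK : β * K * (1 - b ^ 2) = 8 * (d1 + d2)) :
    jacobian d1 d2 K β (K * d2 * (1 + b) / (2 * (d1 + d2))) (K * d1 * (1 + b) / (2 * (d1 + d2))) =
      !![d1 * (d1 * (1 - b) - 2 * d2 * b) / ((d1 + d2) * (1 - b)) - d1,
          d2 * (d2 * (1 - b) - 2 * d1 * b) / ((d1 + d2) * (1 - b));
         d1 * (d1 * (1 - b) - 2 * d2 * b) / ((d1 + d2) * (1 - b)),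
          d2 * (d2 * (1 - b) - 2 * d1 * b) / ((d1 + d2) * (1 - b)) - d2] := by
  have h1b : 1 - b ≠ 0 := sub_ne_zero.mpr hb.symm
  set f := K * d2 * (1 + b) / (2 * (d1 + d2))
  set m := K * d1 * (1 + b) / (2 * (d1 + d2))
  have hfm : β * m / 2 * ((1 - (f + m) / K) - f / K) =
      d1 * (d1 * (1 - b) - 2 * d2 * b) / ((d1 + d2) * (1 - b)) := by
    simp only [f, m]
    field_simp
    linear_combination d1 * (d1 * (1 - b) - 2 * b * d2) * hβK
  have hmf : β * f / 2 * ((1 - (f + m) / K) - m / K) =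
      d2 * (d2 * (1 - b) - 2 * d1 * b) / ((d1 + d2) * (1 - b)) := by
    simp only [f, m]
    field_simp
    linear_combination d2 * (d2 * (1 - b) - 2 * b * d1) * hβK
  rw [jacobian, hfm, hmf]

lemma trace_jacobian_equilibrium (hs : d1 + d2 ≠ 0) (hK : K ≠ 0) (hb : b ≠ 1)
    (hβK : β * K * (1 - b ^ 2) = 8 * (d1 + d2)) :
    (jacobian d1 d2 K β (K * d2 * (1 + b) / (2 * (d1 + d2)))
      (K * d1 * (1 + b) / (2 * (d1 + d2)))).trace =
      -(2 * d1 * d2 * (1 + b)) / ((d1 + d2) * (1 - b)) := by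
  have h1b : 1 - b ≠ 0 := sub_ne_zero.mpr hb.symm
  rw [jacobian_equilibrium hs hK hb hβK, Matrix.trace_fin_two_of]
  field_simp
  ring

lemma det_jacobian_equilibrium (hs : d1 + d2 ≠ 0) (hK : K ≠ 0) (hb : b ≠ 1)
    (hβK : β * K * (1 - b ^ 2) = 8 * (d1 + d2)) :
    (jacobian d1 d2 K β (K * d2 * (1 + b) / (2 * (d1 + d2)))
      (K * d1 * (1 + b) / (2 * (d1 + d2)))).det = 2 * d1 * d2 * b / (1 - b) := by
  have h1b : 1 - b ≠ 0 := sub_ne_zero.mpr hb.symm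
  rw [jacobian_equilibrium hs hK hb hβK, Matrix.det_fin_two_of]
  field_simp
  ring

end Equilibrium

lemma Complex.re_neg_of_sq_sub_mul_add_eq_zero {t d : ℝ} (ht : t < 0) (hd : 0 < d) {z : ℂ}
    (hz : z ^ 2 - t * z + d = 0) : z.re < 0 := by
  have hre := congrArg Complex.re hz
  have him := congrArg Complex.im hz
  simp only [pow_two, Complex.add_re, Complex.sub_re, Complex.mul_re, Complex.mul_im,
    Complex.add_im, Complex.sub_im, Complex.ofReal_re, Complex.ofReal_im, Complex.zero_re,
    Complex.zero_im] at hre him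
  have hcross : z.im * (2 * z.re - t) = 0 := by linear_combination him
  rcases mul_eq_zero.mp hcross with hreal | hmid
  · rw [hreal] at hre
    by_contra! hx
    nlinarith [mul_nonneg hx (neg_nonneg.mpr ht.le)]
  · linarith

lemma Matrix.re_neg_of_isRoot_charpoly_fin_two {A : Matrix (Fin 2) (Fin 2) ℝ} (htr : A.trace < 0)
    (hdet : 0 < A.det) {z : ℂ} (hz : (A.charpoly.map (algebraMap ℝ ℂ)).IsRoot z) : z.re < 0 := by
  refine Complex.re_neg_of_sq_sub_mul_add_eq_zero htr hdet ?_
  simpa [A.charpoly_fin_two] using hz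

lemma sqrt_one_sub_mem_Ioo {c : ℝ} (hc0 : 0 < c) (hc1 : c < 1) : √(1 - c) ∈ Set.Ioo 0 1 := by
  constructor
  · exact Real.sqrt_pos.mpr (by linarith)
  · rw [Real.sqrt_lt' one_pos]; linarith

/-- For `β > β₀ = 8(d₁+d₂)/K` and `b = √(1 - 8(d₁+d₂)/(K·β))`, the Jacobian
matrix `A(f₊,m₊)` has negative trace and positive determinant, and every complex root of its
characteristic polynomial has negative real part. -/
theorem stmt11 (d1 d2 K β : ℝ) (hd1 : 0 < d1) (hd2 : 0 < d2) (hK : 0 < K) (hβ : 0 < β)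
    (hβ0 : β > 8 * (d1 + d2) / K) (b : ℝ) (hb : b = Real.sqrt (1 - 8 * (d1 + d2) / (K * β)))
    (fp mp : ℝ)
    (hfp : fp = K * d2 * (1 + b) / (2 * (d1 + d2))) (hmp : mp = K * d1 * (1 + b) / (2 * (d1 + d2)))
    (A : Matrix (Fin 2) (Fin 2) ℝ)
    (hA : A =
      !![β * mp / 2 * ((1 - (fp + mp) / K) - fp / K) - d1, β * fp / 2 * ((1 - (fp + mp) / K) - mp / K);
         β * mp / 2 * ((1 - (fp + mp) / K) - fp / K), β * fp / 2 * ((1 - (fp + mp) / K) - mp / K) - d2]) :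
    A.trace < 0 ∧ 0 < A.det ∧
    ∀ z : ℂ, (A.charpoly.map (algebraMap ℝ ℂ)).IsRoot z → z.re < 0 := by
  have hs : 0 < d1 + d2 := add_pos hd1 hd2
  have hc1 : 8 * (d1 + d2) / (K * β) < 1 := by
    rw [← div_div, div_lt_one hβ]; exact hβ0
  obtain ⟨hb0, hb1⟩ : b ∈ Set.Ioo 0 1 := hb ▸ sqrt_one_sub_mem_Ioo (by positivity) hc1
  have hβK : β * K * (1 - b ^ 2) = 8 * (d1 + d2) := by
    rw [hb, Real.sq_sqrt (by linarith)]; field_simp; ring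
  have hJ : A = jacobian d1 d2 K β fp mp := hA
  subst hfp hmp
  have h1b : 0 < 1 - b := sub_pos.mpr hb1
  have htr : A.trace < 0 := by
    rw [hJ, trace_jacobian_equilibrium hs.ne' hK.ne' hb1.ne hβK, neg_div, neg_lt_zero]
    positivity
  have hdet : 0 < A.det := by
    rw [hJ, det_jacobian_equilibrium hs.ne' hK.ne' hb1.ne hβK]
    positivity
  exact ⟨htr, hdet, fun _ ↦ Matrix.re_neg_of_isRoot_charpoly_fin_two htr hdet⟩
end

section
/- Let d1, d2, K, β be positive real numbers with β > β0 = 8(d1+d2)/K and set b = √(1 - 8(d1+d2)/(K·β)). Then the Jacobian matrix A(f₋,m₋) has negative determinant, and consequently its characteristic polynomial has a real root that is strictly positive and a real root that is strictly negative. -/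
open Polynomial

lemma charpoly_fin_two' (A : Matrix (Fin 2) (Fin 2) ℝ) :
    A.charpoly = X ^ 2 - C A.trace * X + C A.det := by
  rw [Matrix.charpoly, Matrix.det_fin_two]
  simp only [Matrix.charmatrix_apply_eq, Matrix.charmatrix_apply_ne _ _ _ (by decide : (0:Fin 2) ≠ 1),
    Matrix.charmatrix_apply_ne _ _ _ (by decide : (1:Fin 2) ≠ 0), Matrix.trace_fin_two,
    Matrix.det_fin_two]
  simp [C_add, C_sub, C_mul]; ring

lemma quad_roots (t D : ℝ) (hD : D < 0) :
    (∃ x : ℝ, x ^ 2 - t * x + D = 0 ∧ 0 < x) ∧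
    (∃ y : ℝ, y ^ 2 - t * y + D = 0 ∧ y < 0) := by
  have hdisc : 0 < t ^ 2 - 4 * D := by nlinarith [sq_nonneg t]
  have hs : Real.sqrt (t ^ 2 - 4 * D) ^ 2 = t ^ 2 - 4 * D :=
    Real.sq_sqrt hdisc.le
  have hst : |t| < Real.sqrt (t ^ 2 - 4 * D) := by
    have := Real.sqrt_lt_sqrt (sq_abs t ▸ sq_nonneg t) (by nlinarith : t ^ 2 < t ^ 2 - 4 * D)
    rwa [Real.sqrt_sq_eq_abs] at this
  have h1 := abs_lt.mp hst
  constructor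
  · exact ⟨(t + Real.sqrt (t ^ 2 - 4 * D)) / 2, by nlinarith, by linarith [h1.1]⟩
  · exact ⟨(t - Real.sqrt (t ^ 2 - 4 * D)) / 2, by nlinarith, by linarith [h1.2]⟩

/-- For `β > β₀ = 8(d₁+d₂)/K` and `b = √(1 - 8(d₁+d₂)/(K·β))`, the Jacobian
matrix `A(f₋,m₋)` has negative determinant, and its characteristic polynomial has a strictly
positive real root and a strictly negative real root. -/
theorem stmt12 (d1 d2 K β : ℝ) (hd1 : 0 < d1) (hd2 : 0 < d2) (hK : 0 < K) (hβ : 0 < β)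
    (hβ0 : β > 8 * (d1 + d2) / K) (b : ℝ) (hb : b = Real.sqrt (1 - 8 * (d1 + d2) / (K * β)))
    (fm mm : ℝ)
    (hfm : fm = K * d2 * (1 - b) / (2 * (d1 + d2))) (hmm : mm = K * d1 * (1 - b) / (2 * (d1 + d2)))
    (A : Matrix (Fin 2) (Fin 2) ℝ)
    (hA : A =
      !![β * mm / 2 * ((1 - (fm + mm) / K) - fm / K) - d1, β * fm / 2 * ((1 - (fm + mm) / K) - mm / K);
         β * mm / 2 * ((1 - (fm + mm) / K) - fm / K), β * fm / 2 * ((1 - (fm + mm) / K) - mm / K) - d2]) :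
    A.det < 0 ∧
    (∃ x : ℝ, A.charpoly.IsRoot x ∧ 0 < x) ∧
    (∃ y : ℝ, A.charpoly.IsRoot y ∧ y < 0) := by
  have hs : 0 < d1 + d2 := by linarith
  have harg : 0 < 1 - 8 * (d1 + d2) / (K * β) := by
    have h1 : 8 * (d1 + d2) / (K * β) < 1 := by
      rw [div_lt_one (by positivity)]
      calc 8 * (d1 + d2) = 8 * (d1 + d2) / K * K := by field_simp
        _ < β * K := by apply mul_lt_mul_of_pos_right hβ0 hK
        _ = K * β := by ring
    linarith
  have harg1 : 1 - 8 * (d1 + d2) / (K * β) < 1 := by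
    have : 0 < 8 * (d1 + d2) / (K * β) := by positivity
    linarith
  have hbpos : 0 < b := by rw [hb]; exact Real.sqrt_pos.mpr harg
  have hblt : b < 1 := by
    rw [hb]
    calc Real.sqrt (1 - 8 * (d1 + d2) / (K * β)) < Real.sqrt 1 := Real.sqrt_lt_sqrt harg.le harg1
      _ = 1 := Real.sqrt_one
  have hb2 : b ^ 2 = 1 - 8 * (d1 + d2) / (K * β) := by
    rw [hb]; exact Real.sq_sqrt harg.le
  have hβval : β = 8 * (d1 + d2) / (K * (1 - b ^ 2)) := by
    have h1b : 1 - b ^ 2 ≠ 0 := by nlinarith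
    field_simp at hb2 ⊢
    nlinarith [hb2]
  have hdet : A.det = -2 * b * d1 * d2 / (1 + b) := by
    rw [hA, Matrix.det_fin_two_of, hfm, hmm, hβval]
    have h1b : 1 - b ^ 2 ≠ 0 := by nlinarith
    field_simp
    ring
  have hdetneg : A.det < 0 := by
    rw [hdet]
    apply div_neg_of_neg_of_pos (by nlinarith [mul_pos (mul_pos hbpos hd1) hd2]) (by linarith)
  refine ⟨hdetneg, ?_⟩
  have hcp := charpoly_fin_two' A
  have hq := quad_roots A.trace A.det hdetneg
  constructor
  · obtain ⟨x, hx, hxpos⟩ := hq.1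
    exact ⟨x, by simp [hcp, Polynomial.IsRoot, hx], hxpos⟩
  · obtain ⟨y, hy, hyneg⟩ := hq.2
    exact ⟨y, by simp [hcp, Polynomial.IsRoot, hy], hyneg⟩
end
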